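/- arXiv:0810.1028 — 3 statements merged into one kernel-verified Lean document; each statement's English description precedes it below -/
import Mathlib

section
/- Let R be the valuation ring of a field K complete with respect to a non-discrete rank-1 valuation w. Then the map sending a power series f(X) = Σ f_i X^i ∈ R[[X]] to inf_i w(f_i) is a valuation on R[[X]]; in particular it is multiplicative: w(f·g) = w(f) + w(g) for all f, g ∈ R[[X]]. -/
/-
For `s > 0` consider the tilted values `w(fᵢ) + i s`, i.e. the Gauss valuation on a slightly
smaller disc. When the coefficients of `f` are bounded below these tend to `∞`, so they have a
least minimizing index `i₀`; with `j₀` the analogous index for `g`, the product `fᵢ₀ gⱼ₀` is the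
unique term of smallest valuation in the coefficient of `X^(i₀ + j₀)` of `fg`. Hence
`w(fg) ≤ w(fₖ) + w(gₗ) + (k + l) s` for all `k, l`, and letting `s → 0` gives
`w(fg) ≤ w(f) + w(g)`. The reverse inequality and the ultrametric inequality hold coefficientwise.
-/

open PowerSeries Filter Set

/-- An additive rank-1 (real-valued) non-archimedean valuation on a field `K`,
with values in `EReal` (real numbers on nonzero elements, `⊤` at `0`). -/
structure AddRealValuation (K : Type*) [Field K] where
  w : K → EReal
  map_zero' : w 0 = ⊤
  finite' : ∀ x : K, x ≠ 0 → ∃ r : ℝ, w x = (r : EReal)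
  map_one' : w 1 = 0
  map_mul' : ∀ x y : K, w (x * y) = w x + w y
  map_neg' : ∀ x : K, w (-x) = w x
  add_le' : ∀ x y : K, min (w x) (w y) ≤ w (x + y)

namespace AddRealValuation

variable {K : Type*} [Field K] (v : AddRealValuation K)

/-- The valuation is non-discrete: there exist elements of arbitrarily
small positive valuation. -/
def Nondiscrete : Prop := ∀ ε : ℝ, 0 < ε → ∃ x : K, 0 < v.w x ∧ v.w x < (ε : EReal)

/-- `K` is complete with respect to `v`: every Cauchy sequence converges. -/
def IsComplete : Prop :=
  ∀ u : ℕ → K, (∀ M : ℝ, ∃ N : ℕ, ∀ m ≥ N, ∀ n ≥ N, (M : EReal) ≤ v.w (u m - u n)) →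
    ∃ L : K, ∀ M : ℝ, ∃ N : ℕ, ∀ n ≥ N, (M : EReal) ≤ v.w (u n - L)

/-- The valuation ring `R = {x : K | w x ≥ 0}` of `v`. -/
def subring : Subring K where
  carrier := {x | 0 ≤ v.w x}
  zero_mem' := by show (0:EReal) ≤ v.w 0; rw [v.map_zero']; exact le_top
  one_mem' := by show (0:EReal) ≤ v.w 1; rw [v.map_one']
  add_mem' := fun hx hy => le_trans (le_min hx hy) (v.add_le' _ _)
  mul_mem' := fun hx hy => by
    show (0:EReal) ≤ v.w _; rw [v.map_mul']; exact add_nonneg hx hy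
  neg_mem' := fun {x} hx => by show (0:EReal) ≤ v.w (-x); rw [v.map_neg']; exact hx

/-- The extension of `v` to power series over `K`: the infimum of the
valuations of the coefficients. -/
noncomputable def wS (f : PowerSeries K) : EReal := ⨅ i : ℕ, v.w (PowerSeries.coeff i f)

/-- The extension of `v` to power series over the valuation ring `R` of `v`. -/
noncomputable def wR (f : PowerSeries v.subring) : EReal :=
  ⨅ i : ℕ, v.w ((PowerSeries.coeff i f : v.subring) : K)

/-- `f` is a convergent power series (lies in the Tate algebra `K{X}`):
the valuations of the coefficients tend to `∞`. -/
def Conv (f : PowerSeries K) : Prop :=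
  ∀ M : ℝ, ∃ N : ℕ, ∀ i ≥ N, (M : EReal) ≤ v.w (PowerSeries.coeff i f)

/-- The series `f(c) = Σ fᵢ cⁱ` (with `f` over the valuation ring `R`) converges to `0`:
the valuations of the partial sums tend to `∞`. -/
def EvalZeroR (f : PowerSeries v.subring) (c : v.subring) : Prop :=
  ∀ M : ℝ, ∃ N : ℕ, ∀ n ≥ N,
    (M : EReal) ≤ v.w ((∑ i ∈ Finset.range n, PowerSeries.coeff i f * c ^ i : v.subring) : K)

end AddRealValuation

/-- `𝓕` is a defining family of rank-1 valuations exhibiting the domain `D`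
(with fraction field `F`) as a generalized Krull domain:
(a) for each `v ∈ 𝓕` the valuation ring of `v` is the localization of `D`
at the prime `{a : v a > 0}`; (b) `⋂ D_v = D`; (c) each nonzero `a ∈ D`
satisfies `v a = 0` for all but finitely many `v ∈ 𝓕`. -/
def IsGKFamily (D : Type*) [CommRing D] [IsDomain D] (F : Type*) [Field F]
    [Algebra D F] [IsFractionRing D F] (𝓕 : Set (AddRealValuation F)) : Prop :=
  (∀ u ∈ 𝓕, ∀ x : F, 0 ≤ u.w x ↔
    ∃ a b : D, b ≠ 0 ∧ ¬ 0 < u.w (algebraMap D F b) ∧ x * algebraMap D F b = algebraMap D F a) ∧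
  (∀ x : F, (∀ u ∈ 𝓕, 0 ≤ u.w x) → ∃ a : D, x = algebraMap D F a) ∧
  (∀ a : D, a ≠ 0 → {u ∈ 𝓕 | u.w (algebraMap D F a) ≠ 0}.Finite)

lemma exists_least_argmin {α : Type*} [LinearOrder α] (T : ℕ → α) {k : ℕ}
    (h : ∀ᶠ j in atTop, T k < T j) : ∃ i, (∀ j, T i ≤ T j) ∧ ∀ j < i, T i < T j := by
  classical
  obtain ⟨N, hN⟩ := eventually_atTop.1 h
  have hmin : ∃ i, ∀ j, T i ≤ T j := by
    obtain ⟨m, -, hm⟩ := (Finset.range (N + k + 1)).exists_min_image T ⟨k, by simp⟩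
    refine ⟨m, fun j => ?_⟩
    by_cases hj : j < N + k + 1
    · exact hm j (Finset.mem_range.2 hj)
    · exact (hm k (by simp)).trans (hN j (by omega)).le
  refine ⟨Nat.find hmin, Nat.find_spec hmin, fun j hj => ?_⟩
  obtain ⟨j', hj'⟩ := not_forall.1 (Nat.find_min hmin hj)
  exact (Nat.find_spec hmin j').trans_lt (not_le.1 hj')

namespace AddRealValuation

variable {K : Type*} [Field K] (v : AddRealValuation K)

lemma w_ne_bot (x : K) : v.w x ≠ ⊥ := by
  by_cases hx : x = 0
  · simp [hx, v.map_zero']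
  · obtain ⟨r, hr⟩ := v.finite' x hx
    simp [hr]

lemma w_ne_top {x : K} (hx : x ≠ 0) : v.w x ≠ ⊤ := by
  obtain ⟨r, hr⟩ := v.finite' x hx
  simp [hr]

lemma le_w_sum {ι : Type*} (s : Finset ι) (t : ι → K) {M : EReal}
    (h : ∀ i ∈ s, M ≤ v.w (t i)) : M ≤ v.w (∑ i ∈ s, t i) := by
  induction s using Finset.cons_induction with
  | empty => simp [v.map_zero']
  | cons i s hi ih =>
    rw [Finset.sum_cons]
    exact (le_min (h i (Finset.mem_cons_self i s))
      (ih fun j hj => h j (Finset.mem_cons_of_mem hj))).trans (v.add_le' _ _)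

lemma lt_w_sum {ι : Type*} (s : Finset ι) (t : ι → K) {M : EReal} (hM : M ≠ ⊤)
    (h : ∀ i ∈ s, M < v.w (t i)) : M < v.w (∑ i ∈ s, t i) := by
  induction s using Finset.cons_induction with
  | empty => simpa [v.map_zero'] using hM.lt_top
  | cons i s hi ih =>
    rw [Finset.sum_cons]
    exact (lt_min (h i (Finset.mem_cons_self i s))
      (ih fun j hj => h j (Finset.mem_cons_of_mem hj))).trans_le (v.add_le' _ _)

lemma w_add_eq_of_lt {x y : K} (h : v.w x < v.w y) : v.w (x + y) = v.w x := by
  refine le_antisymm ?_ ((le_min le_rfl h.le).trans (v.add_le' x y))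
  have h' := v.add_le' (x + y) (-y)
  rw [v.map_neg', add_neg_cancel_right] at h'
  exact (min_le_iff.1 h').resolve_right h.not_ge

lemma w_sum_eq_of_lt {ι : Type*} [DecidableEq ι] {s : Finset ι} (t : ι → K) {i₀ : ι}
    (hi₀ : i₀ ∈ s) (hne : v.w (t i₀) ≠ ⊤) (h : ∀ i ∈ s, i ≠ i₀ → v.w (t i₀) < v.w (t i)) :
    v.w (∑ i ∈ s, t i) = v.w (t i₀) := by
  rw [← Finset.add_sum_erase s t hi₀]
  exact v.w_add_eq_of_lt (v.lt_w_sum _ _ hne fun i hi =>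
    h i (Finset.mem_of_mem_erase hi) (Finset.ne_of_mem_erase hi))

lemma le_wS_iff {f : PowerSeries K} {M : EReal} : M ≤ v.wS f ↔ ∀ i, M ≤ v.w (coeff i f) :=
  le_iInf_iff

lemma wS_le (f : PowerSeries K) (i : ℕ) : v.wS f ≤ v.w (coeff i f) := iInf_le _ i

lemma min_le_wS_add (f g : PowerSeries K) : min (v.wS f) (v.wS g) ≤ v.wS (f + g) :=
  v.le_wS_iff.2 fun i => by
    rw [map_add]
    exact (min_le_min (v.wS_le f i) (v.wS_le g i)).trans (v.add_le' _ _)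

lemma add_le_wS_mul (f g : PowerSeries K) : v.wS f + v.wS g ≤ v.wS (f * g) :=
  v.le_wS_iff.2 fun n => by
    rw [coeff_mul]
    exact v.le_w_sum _ _ fun p _ => by
      rw [v.map_mul']
      exact add_le_add (v.wS_le f p.1) (v.wS_le g p.2)

/-- The valuation of the term `fᵢ Xⁱ` when `X` is given valuation `s`. -/
noncomputable def wTilt (s : ℝ) (f : PowerSeries K) (i : ℕ) : EReal :=
  v.w (coeff i f) + ((i * s : ℝ) : EReal)

lemma wTilt_ne_bot (s : ℝ) (f : PowerSeries K) (i : ℕ) : v.wTilt s f i ≠ ⊥ :=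
  EReal.add_ne_bot_iff.2 ⟨v.w_ne_bot _, EReal.coe_ne_bot _⟩

lemma wTilt_ne_top {s : ℝ} {f : PowerSeries K} {i : ℕ} (hi : coeff i f ≠ 0) :
    v.wTilt s f i ≠ ⊤ :=
  EReal.add_ne_top (v.w_ne_top hi) (EReal.coe_ne_top _)

lemma wTilt_add_wTilt (s : ℝ) (f g : PowerSeries K) (i j : ℕ) :
    v.wTilt s f i + v.wTilt s g j =
      v.w (coeff i f * coeff j g) + (((i + j : ℕ) * s : ℝ) : EReal) := by
  rw [wTilt, wTilt, v.map_mul', add_add_add_comm, ← EReal.coe_add, Nat.cast_add, add_mul]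

lemma w_coeff_mul_of_least_argmin_wTilt (s : ℝ) {f g : PowerSeries K} {i₀ j₀ : ℕ}
    (hf₀ : coeff i₀ f ≠ 0) (hg₀ : coeff j₀ g ≠ 0)
    (hf_le : ∀ i, v.wTilt s f i₀ ≤ v.wTilt s f i)
    (hf_lt : ∀ i < i₀, v.wTilt s f i₀ < v.wTilt s f i)
    (hg_le : ∀ j, v.wTilt s g j₀ ≤ v.wTilt s g j)
    (hg_lt : ∀ j < j₀, v.wTilt s g j₀ < v.wTilt s g j) :
    v.w (coeff (i₀ + j₀) (f * g)) = v.w (coeff i₀ f * coeff j₀ g) := by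
  classical
  rw [coeff_mul]
  have h_fin : v.w (coeff i₀ f * coeff j₀ g) ≠ ⊤ := by
    rw [v.map_mul']
    exact EReal.add_ne_top (v.w_ne_top hf₀) (v.w_ne_top hg₀)
  refine v.w_sum_eq_of_lt (fun p => coeff p.1 f * coeff p.2 g) (i₀ := (i₀, j₀))
    (Finset.HasAntidiagonal.mem_antidiagonal.2 rfl) h_fin ?_
  rintro ⟨i, j⟩ hij hne
  rw [Finset.HasAntidiagonal.mem_antidiagonal] at hij
  have hlt : v.wTilt s f i₀ + v.wTilt s g j₀ < v.wTilt s f i + v.wTilt s g j := by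
    have hi : i ≠ i₀ := fun h => hne (Prod.ext h (show j = j₀ by omega))
    rcases hi.lt_or_gt with hi | hi
    · exact EReal.add_lt_add_of_lt_of_le' (hf_lt i hi) (hg_le j) (v.wTilt_ne_bot s g j)
        fun _ h => absurd h (v.wTilt_ne_top hg₀)
    · rw [add_comm (v.wTilt s f i₀), add_comm (v.wTilt s f i)]
      exact EReal.add_lt_add_of_lt_of_le' (hg_lt j (by omega)) (hf_le i) (v.wTilt_ne_bot s f i)
        fun _ h => absurd h (v.wTilt_ne_top hf₀)
  rw [v.wTilt_add_wTilt, v.wTilt_add_wTilt, hij] at hlt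
  exact lt_of_not_ge fun h => hlt.not_ge (add_le_add h le_rfl)

lemma exists_least_argmin_wTilt {s : ℝ} (hs : 0 < s) {f : PowerSeries K} (hf : v.wS f ≠ ⊥)
    {k : ℕ} (hk : coeff k f ≠ 0) : ∃ i₀, coeff i₀ f ≠ 0 ∧
      (∀ i, v.wTilt s f i₀ ≤ v.wTilt s f i) ∧ ∀ i < i₀, v.wTilt s f i₀ < v.wTilt s f i := by
  have hf_top : v.wS f ≠ ⊤ := ne_top_of_le_ne_top (v.w_ne_top hk) (v.wS_le f k)
  have h_eventually : ∀ᶠ i in atTop, v.wTilt s f k < v.wTilt s f i := by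
    rw [← EReal.coe_toReal (v.wTilt_ne_top hk) (v.wTilt_ne_bot s f k)]
    filter_upwards [(tendsto_atTop_add_const_left _ (v.wS f).toReal
      (tendsto_natCast_atTop_atTop.atTop_mul_const hs)).eventually_gt_atTop
        (v.wTilt s f k).toReal] with i hi
    calc _ < (((v.wS f).toReal + i * s : ℝ) : EReal) := EReal.coe_lt_coe_iff.2 hi
      _ = v.wS f + ((i * s : ℝ) : EReal) := by rw [EReal.coe_add, EReal.coe_toReal hf_top hf]
      _ ≤ v.wTilt s f i := add_le_add_left (v.wS_le f i) _
  obtain ⟨i₀, hle, hlt⟩ := exists_least_argmin _ h_eventually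
  refine ⟨i₀, fun h => v.wTilt_ne_top (s := s) hk ?_, hle, hlt⟩
  have h_top := hle k
  rwa [wTilt, h, v.map_zero', EReal.top_add_of_ne_bot (EReal.coe_ne_bot _), top_le_iff] at h_top

lemma wS_mul_le_add_wTilt {s : ℝ} (hs : 0 < s) {f g : PowerSeries K} (hf : v.wS f ≠ ⊥)
    (hg : v.wS g ≠ ⊥) {k l : ℕ} (hk : coeff k f ≠ 0) (hl : coeff l g ≠ 0) :
    v.wS (f * g) ≤ v.wTilt s f k + v.wTilt s g l := by
  obtain ⟨i₀, hf₀, hf_le, hf_lt⟩ := v.exists_least_argmin_wTilt hs hf hk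
  obtain ⟨j₀, hg₀, hg_le, hg_lt⟩ := v.exists_least_argmin_wTilt hs hg hl
  calc v.wS (f * g) ≤ v.w (coeff (i₀ + j₀) (f * g)) := v.wS_le _ _
    _ ≤ v.w (coeff (i₀ + j₀) (f * g)) + (((i₀ + j₀ : ℕ) * s : ℝ) : EReal) :=
      le_add_of_nonneg_right (EReal.coe_nonneg.2 (by positivity))
    _ = v.wTilt s f i₀ + v.wTilt s g j₀ := by
      rw [v.w_coeff_mul_of_least_argmin_wTilt s hf₀ hg₀ hf_le hf_lt hg_le hg_lt, v.wTilt_add_wTilt]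
    _ ≤ v.wTilt s f k + v.wTilt s g l := add_le_add (hf_le k) (hg_le l)

lemma wS_mul_le_w_mul_coeff {f g : PowerSeries K} (hf : v.wS f ≠ ⊥) (hg : v.wS g ≠ ⊥)
    (k l : ℕ) : v.wS (f * g) ≤ v.w (coeff k f * coeff l g) := by
  by_cases hk : coeff k f = 0
  · simp [hk, v.map_zero']
  by_cases hl : coeff l g = 0
  · simp [hl, v.map_zero']
  have h_fin : v.w (coeff k f * coeff l g) ≠ ⊤ := by
    rw [v.map_mul']
    exact EReal.add_ne_top (v.w_ne_top hk) (v.w_ne_top hl)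
  set A := (v.w (coeff k f * coeff l g)).toReal
  have hA : v.w (coeff k f * coeff l g) = A := (EReal.coe_toReal h_fin (v.w_ne_bot _)).symm
  rw [hA, ← EReal.le_of_forall_lt_iff_le]
  intro z hz
  have hAz : A < z := EReal.coe_lt_coe_iff.1 hz
  set s := (z - A) / ((k + l : ℕ) + 1)
  have hs : 0 < s := div_pos (by linarith) (by positivity)
  have hs_mul : s * ((k + l : ℕ) + 1) = z - A := div_mul_cancel₀ _ (by positivity)
  calc v.wS (f * g) ≤ v.wTilt s f k + v.wTilt s g l := v.wS_mul_le_add_wTilt hs hf hg hk hl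
    _ = ((A + (k + l : ℕ) * s : ℝ) : EReal) := by rw [v.wTilt_add_wTilt, hA, EReal.coe_add]
    _ ≤ z := EReal.coe_le_coe_iff.2 (by nlinarith)

theorem wS_mul {f g : PowerSeries K} (hf : v.wS f ≠ ⊥) (hg : v.wS g ≠ ⊥) :
    v.wS (f * g) = v.wS f + v.wS g := by
  refine le_antisymm (EReal.le_add_of_forall_gt (.inl hf) (.inr hg) fun a ha b hb => ?_)
    (v.add_le_wS_mul f g)
  obtain ⟨k, hk⟩ := iInf_lt_iff.1 ha
  obtain ⟨l, hl⟩ := iInf_lt_iff.1 hb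
  calc v.wS (f * g) ≤ v.w (coeff k f * coeff l g) := v.wS_mul_le_w_mul_coeff hf hg k l
    _ = v.w (coeff k f) + v.w (coeff l g) := v.map_mul' _ _
    _ ≤ a + b := add_le_add hk.le hl.le

lemma wR_eq_wS_map (f : PowerSeries v.subring) : v.wR f = v.wS (map v.subring.subtype f) := by
  simp [wR, wS, coeff_map]

lemma wS_map_ne_bot (f : PowerSeries v.subring) : v.wS (map v.subring.subtype f) ≠ ⊥ :=
  ne_bot_of_le_ne_bot EReal.zero_ne_bot (v.le_wS_iff.2 fun i => by
    rw [coeff_map]; exact (coeff i f).2)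

end AddRealValuation

theorem statement1_general {K : Type*} [Field K] (v : AddRealValuation K)
    (f g : PowerSeries v.subring) :
    v.wR (f * g) = v.wR f + v.wR g ∧ min (v.wR f) (v.wR g) ≤ v.wR (f + g) := by
  simp only [v.wR_eq_wS_map, map_mul, map_add]
  exact ⟨v.wS_mul (v.wS_map_ne_bot f) (v.wS_map_ne_bot g), v.min_le_wS_add _ _⟩

/-- For `K` complete with respect to a non-discrete rank-1 valuation
with valuation ring `R`, the map `f ↦ ⨅ i, w fᵢ` on `R[[X]]` is a valuation;
in particular it is multiplicative. -/
theorem statement1 {K : Type*} [Field K] (v : AddRealValuation K)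
    (hcomp : v.IsComplete) (hnd : v.Nondiscrete)
    (f g : PowerSeries v.subring) :
    v.wR (f * g) = v.wR f + v.wR g ∧ min (v.wR f) (v.wR g) ≤ v.wR (f + g) :=
  statement1_general v f g
end

section
/- Let R be a non-discrete rank-1 valuation ring with maximal ideal 𝔪 and fraction field K, let D = R[[X]] with fraction field F, and suppose D is a generalized Krull domain with defining family of rank-1 valuations ℱ on F. Fix t ∈ 𝔪, t ≠ 0. Then every v ∈ ℱ that is non-trivial on R satisfies v(t) > 0, and consequently only finitely many v ∈ ℱ are non-trivial on R. -/
open PowerSeries Filter Set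

namespace AddRealValuation

variable {K : Type*} [Field K] (v : AddRealValuation K)

theorem w_pow (x : K) (n : ℕ) : v.w (x ^ n) = n • v.w x := by
  induction n with
  | zero => simp [v.map_one']
  | succ n ih => rw [pow_succ, v.map_mul', ih, succ_nsmul]

theorem w_inv {x : K} (hx : x ≠ 0) : v.w x⁻¹ = -v.w x := by
  obtain ⟨r, hr⟩ := v.finite' x hx
  obtain ⟨s, hs⟩ := v.finite' x⁻¹ (inv_ne_zero hx)
  have hsum : ((r + s : ℝ) : EReal) = 0 := by
    rw [EReal.coe_add, ← hr, ← hs, ← v.map_mul', mul_inv_cancel₀ hx, v.map_one']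
  rw [hr, hs, ← EReal.coe_neg, EReal.coe_eq_coe_iff]
  linarith [EReal.coe_eq_zero.mp hsum]

theorem w_le_w_mul {x y : K} (hy : 0 ≤ v.w y) : v.w x ≤ v.w (x * y) := by
  rw [v.map_mul']
  exact le_add_of_nonneg_right hy

theorem exists_dvd_pow {a t : v.subring} (ha : a ≠ 0) (ht : 0 < v.w t) :
    ∃ n : ℕ, a ∣ t ^ n := by
  rcases eq_or_ne t 0 with rfl | ht0
  · exact ⟨1, by simp⟩
  have haK : (a : K) ≠ 0 := by exact_mod_cast ha
  obtain ⟨ra, hra⟩ := v.finite' a haK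
  obtain ⟨rt, hrt⟩ := v.finite' t (by exact_mod_cast ht0)
  have hrt_pos : 0 < rt := EReal.coe_pos.mp (hrt ▸ ht)
  obtain ⟨n, hn⟩ := Archimedean.arch ra hrt_pos
  have hc : 0 ≤ v.w ((t : K) ^ n * (a : K)⁻¹) := by
    rw [v.map_mul', v.w_pow, v.w_inv haK, hra, hrt, ← EReal.coe_nsmul, ← EReal.coe_neg,
      ← EReal.coe_add, EReal.coe_nonneg]
    linarith
  refine ⟨n, ⟨⟨_, hc⟩, Subtype.ext ?_⟩⟩
  change (t : K) ^ n = a * ((t : K) ^ n * (a : K)⁻¹)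
  field_simp

end AddRealValuation

/-!
Since `w` has rank one, a nonzero `a ∈ R` divides some power `tⁿ` in `R`, so
`u a ≤ u (tⁿ) = n • u t` for every `u ∈ 𝓕` (each is nonnegative on `D`). Hence `u a > 0`
forces `u t > 0`, and by (c) only finitely many `u ∈ 𝓕` are positive on `t`.
-/

namespace IsGKFamily

variable {D : Type*} [CommRing D] [IsDomain D] {F : Type*} [Field F] [Algebra D F]
  [IsFractionRing D F] {𝓕 : Set (AddRealValuation F)} {u : AddRealValuation F}

theorem w_algebraMap_nonneg (h𝓕 : IsGKFamily D F 𝓕) (hu : u ∈ 𝓕) (d : D) :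
    0 ≤ u.w (algebraMap D F d) :=
  (h𝓕.1 u hu _).mpr ⟨d, 1, one_ne_zero, by simp [u.map_one'], by simp⟩

theorem w_algebraMap_le_of_dvd (h𝓕 : IsGKFamily D F 𝓕) (hu : u ∈ 𝓕) {a b : D}
    (hab : a ∣ b) : u.w (algebraMap D F a) ≤ u.w (algebraMap D F b) := by
  obtain ⟨c, rfl⟩ := hab
  rw [map_mul]
  exact u.w_le_w_mul (h𝓕.w_algebraMap_nonneg hu c)

theorem w_algebraMap_pos_of_dvd_pow (h𝓕 : IsGKFamily D F 𝓕) (hu : u ∈ 𝓕) {a b : D}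
    {n : ℕ} (hab : a ∣ b ^ n) (ha : 0 < u.w (algebraMap D F a)) : 0 < u.w (algebraMap D F b) := by
  refine (h𝓕.w_algebraMap_nonneg hu b).lt_of_ne fun hb => ?_
  have hbn : u.w (algebraMap D F (b ^ n)) = 0 := by rw [map_pow, u.w_pow, ← hb, nsmul_zero]
  exact (ha.trans_le (h𝓕.w_algebraMap_le_of_dvd hu hab)).ne' hbn

theorem w_algebraMap_pos_of_valuationRing {K : Type*} [Field K] {v : AddRealValuation K}
    (h𝓕 : IsGKFamily D F 𝓕) (hu : u ∈ 𝓕) (φ : v.subring →+* D) {a t : v.subring}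
    (ha : a ≠ 0) (hua : 0 < u.w (algebraMap D F (φ a))) (ht : 0 < v.w t) :
    0 < u.w (algebraMap D F (φ t)) := by
  obtain ⟨n, hn⟩ := v.exists_dvd_pow ha ht
  exact h𝓕.w_algebraMap_pos_of_dvd_pow hu (map_pow φ t n ▸ map_dvd φ hn) hua

theorem finite_setOf_w_algebraMap_pos (h𝓕 : IsGKFamily D F 𝓕) {b : D} (hb : b ≠ 0) :
    {u ∈ 𝓕 | 0 < u.w (algebraMap D F b)}.Finite :=
  (h𝓕.2.2 b hb).subset fun _ ⟨hu, hpos⟩ => ⟨hu, hpos.ne'⟩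

end IsGKFamily

theorem statement10_general {K : Type*} [Field K] (v : AddRealValuation K)
    (𝓕 : Set (AddRealValuation (FractionRing (PowerSeries v.subring))))
    (hGK : IsGKFamily (PowerSeries v.subring) (FractionRing (PowerSeries v.subring)) 𝓕)
    (t : v.subring) (ht0 : t ≠ 0) (htm : 0 < v.w (t : K)) :
    (∀ u ∈ 𝓕,
      (∃ a : v.subring, a ≠ 0 ∧
        u.w (algebraMap (PowerSeries v.subring) (FractionRing (PowerSeries v.subring))
          (PowerSeries.C a)) ≠ 0) →
      0 < u.w (algebraMap (PowerSeries v.subring) (FractionRing (PowerSeries v.subring))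
          (PowerSeries.C t))) ∧
    {u ∈ 𝓕 | ∃ a : v.subring, a ≠ 0 ∧
      u.w (algebraMap (PowerSeries v.subring) (FractionRing (PowerSeries v.subring))
        (PowerSeries.C a)) ≠ 0}.Finite := by
  have key {u} (hu : u ∈ 𝓕) {a : v.subring} (ha0 : a ≠ 0)
      (hua : u.w (algebraMap _ (FractionRing (PowerSeries v.subring)) (PowerSeries.C a)) ≠ 0) :
      0 < u.w (algebraMap _ (FractionRing (PowerSeries v.subring)) (PowerSeries.C t)) :=
    hGK.w_algebraMap_pos_of_valuationRing hu PowerSeries.C ha0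
      ((hGK.w_algebraMap_nonneg hu _).lt_of_ne' hua) htm
  have hCt : PowerSeries.C t ≠ 0 := (map_ne_zero_iff _ PowerSeries.C_injective).mpr ht0
  refine ⟨fun u hu ⟨a, ha0, hua⟩ => key hu ha0 hua,
    (hGK.finite_setOf_w_algebraMap_pos hCt).subset ?_⟩
  rintro u ⟨hu, a, ha0, hua⟩
  exact ⟨hu, key hu ha0 hua⟩

/-- Let `R` be a non-discrete rank-1 valuation ring, `D = R[[X]]`,
`F = Quot(D)`, and suppose `𝓕` is a defining family of rank-1 valuations making `D`
a generalized Krull domain. Fix a nonzero `t` in the maximal ideal `𝔪` of `R`.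
Then every `u ∈ 𝓕` which is non-trivial on `R` satisfies `u t > 0`, and only
finitely many `u ∈ 𝓕` are non-trivial on `R`. -/
theorem statement10 {K : Type*} [Field K] (v : AddRealValuation K)
    (hnd : v.Nondiscrete)
    (𝓕 : Set (AddRealValuation (FractionRing (PowerSeries v.subring))))
    (hGK : IsGKFamily (PowerSeries v.subring) (FractionRing (PowerSeries v.subring)) 𝓕)
    (t : v.subring) (ht0 : t ≠ 0) (htm : 0 < v.w (t : K)) :
    (∀ u ∈ 𝓕,
      (∃ a : v.subring, a ≠ 0 ∧
        u.w (algebraMap (PowerSeries v.subring) (FractionRing (PowerSeries v.subring))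
          (PowerSeries.C a)) ≠ 0) →
      0 < u.w (algebraMap (PowerSeries v.subring) (FractionRing (PowerSeries v.subring))
          (PowerSeries.C t))) ∧
    {u ∈ 𝓕 | ∃ a : v.subring, a ≠ 0 ∧
      u.w (algebraMap (PowerSeries v.subring) (FractionRing (PowerSeries v.subring))
        (PowerSeries.C a)) ≠ 0}.Finite :=
  statement10_general v 𝓕 hGK t ht0 htm
end

section
/- Let (K, w) be a complete non-archimedean rank-1 valued field with valuation ring R and maximal ideal 𝔪. Then R[[X]] = ∩_{a ∈ 𝔪, a≠0} R{X/a}, where R{X/a} = {Σ f_i X^i ∈ K[[X]] : w(f_i) + i·w(a) ≥ 0 for all i, and w(f_i) + i·w(a) → ∞}. That is, a power series over K has all coefficients in R if and only if it lies in R{X/a} for every nonzero a ∈ 𝔪. -/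
open PowerSeries Filter Set

/-!
If every coefficient lies in `R`, then `w fᵢ + i·w a ≥ i·w a`, which is nonnegative and
tends to `∞` because `w a > 0`. Conversely, if `w fᵢ = r < 0` for some `i`, non-discreteness
gives `a ∈ 𝔪` with `0 < w a < -r / (i + 1)`, so `w fᵢ + i·w a < 0` and `f ∉ R{X/a}`.
-/

lemma EReal.exists_forall_le_add_nat_mul {c : ℕ → EReal} (hc : ∀ i, 0 ≤ c i)
    {ε : ℝ} (hε : 0 < ε) (M : ℝ) :
    ∃ N : ℕ, ∀ i ≥ N, (M : EReal) ≤ c i + (i : EReal) * ε := by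
  refine ⟨⌈M / ε⌉₊, fun i hi => ?_⟩
  have hM : M ≤ i * ε := (div_le_iff₀ hε).mp ((Nat.le_ceil _).trans (by exact_mod_cast hi))
  calc (M : EReal) = 0 + ((M : ℝ) : EReal) := (zero_add _).symm
    _ ≤ c i + ((i * ε : ℝ) : EReal) := add_le_add (hc i) (EReal.coe_le_coe_iff.mpr hM)
    _ = c i + (i : EReal) * ε := by rw [EReal.coe_mul]; rfl

namespace AddRealValuation

variable {K : Type*} [Field K]

lemma ne_zero_of_lt_top (v : AddRealValuation K) {x : K} (h : v.w x < ⊤) : x ≠ 0 := by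
  rintro rfl
  exact h.ne v.map_zero'

lemma Nondiscrete.exists_add_nat_mul_neg {v : AddRealValuation K} (hnd : v.Nondiscrete)
    {r : ℝ} (hr : r < 0) (i : ℕ) :
    ∃ a : K, a ≠ 0 ∧ 0 < v.w a ∧ (r : EReal) + (i : EReal) * v.w a < 0 := by
  obtain ⟨a, hpos, hsmall⟩ := hnd (-r / (i + 1)) (div_pos (neg_pos.mpr hr) (by positivity))
  have ha : a ≠ 0 := v.ne_zero_of_lt_top (hsmall.trans (EReal.coe_lt_top _))
  obtain ⟨s, hs⟩ := v.finite' a ha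
  rw [hs] at hpos hsmall
  have hs0 : 0 < s := EReal.coe_pos.mp hpos
  have hsr : (i + 1) * s < -r := by
    rw [← lt_div_iff₀' (by positivity)]
    exact EReal.coe_lt_coe_iff.mp hsmall
  refine ⟨a, ha, hs ▸ hpos, ?_⟩
  rw [hs, ← EReal.coe_natCast, ← EReal.coe_mul, ← EReal.coe_add, EReal.coe_neg']
  nlinarith

end AddRealValuation

theorem statement18_general {K : Type*} [Field K] (v : AddRealValuation K)
    (hnd : v.Nondiscrete)
    (f : PowerSeries K) :
    (∀ i : ℕ, 0 ≤ v.w (PowerSeries.coeff i f)) ↔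
    (∀ a : K, a ≠ 0 → 0 < v.w a →
      (∀ i : ℕ, 0 ≤ v.w (PowerSeries.coeff i f) + (i : EReal) * v.w a) ∧
      (∀ M : ℝ, ∃ N : ℕ, ∀ i ≥ N,
        (M : EReal) ≤ v.w (PowerSeries.coeff i f) + (i : EReal) * v.w a)) := by
  constructor
  · intro h a ha hwa
    obtain ⟨ε, hε⟩ := v.finite' a ha
    rw [hε] at hwa ⊢
    exact ⟨fun i => add_nonneg (h i) (mul_nonneg (Nat.cast_nonneg' i) hwa.le),
      EReal.exists_forall_le_add_nat_mul h (EReal.coe_pos.mp hwa)⟩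
  · intro h i
    by_contra! hneg
    obtain ⟨r, hr⟩ := v.finite' _ (v.ne_zero_of_lt_top (hneg.trans EReal.zero_lt_top))
    rw [hr] at hneg
    obtain ⟨a, ha, hwa, hlt⟩ := hnd.exists_add_nat_mul_neg (EReal.coe_neg'.mp hneg) i
    exact hlt.not_ge (hr ▸ (h a ha hwa).1 i)

/-- Let `(K, w)` be a complete non-discrete rank-1 valued field with
valuation ring `R` and maximal ideal `𝔪`. Then `R[[X]] = ⋂_{0 ≠ a ∈ 𝔪} R{X/a}`:
a power series over `K` has all coefficients in `R` iff for every nonzero `a ∈ 𝔪`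
it satisfies `w fᵢ + i · w a ≥ 0` for all `i` and `w fᵢ + i · w a → ∞`. -/
theorem statement18 {K : Type*} [Field K] (v : AddRealValuation K)
    (hcomp : v.IsComplete) (hnd : v.Nondiscrete)
    (f : PowerSeries K) :
    (∀ i : ℕ, 0 ≤ v.w (PowerSeries.coeff i f)) ↔
    (∀ a : K, a ≠ 0 → 0 < v.w a →
      (∀ i : ℕ, 0 ≤ v.w (PowerSeries.coeff i f) + (i : EReal) * v.w a) ∧
      (∀ M : ℝ, ∃ N : ℕ, ∀ i ≥ N,
        (M : EReal) ≤ v.w (PowerSeries.coeff i f) + (i : EReal) * v.w a)) :=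
  statement18_general v hnd f
end
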